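/- arXiv:1711.02151 — 3 statements merged into one kernel-verified Lean document; each statement's English description precedes it below -/
import Mathlib

section
/- Let L₁ and L₂ be linear subspaces of ℝⁿ with orthogonal projections P_{L₁} and P_{L₂}. Then L₁ ∩ L₂ = {0} if and only if the operator norm of the composition P_{L₂}P_{L₁} is strictly less than 1. -/
open Submodule

lemma aux_pythag {E : Type*} [NormedAddCommGroup E] [InnerProductSpace ℝ E]
    (K : Submodule ℝ E) [HasOrthogonalProjection K] (v : E) :
    ‖v‖ * ‖v‖ = ‖v - (orthogonalProjection K v : E)‖ * ‖v - (orthogonalProjection K v : E)‖ +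
      ‖(orthogonalProjection K v : E)‖ * ‖(orthogonalProjection K v : E)‖ := by
  exact orthogonalProjectionFn_norm_sq K v

lemma aux_norm_le {E : Type*} [NormedAddCommGroup E] [InnerProductSpace ℝ E]
    (K : Submodule ℝ E) [HasOrthogonalProjection K] (v : E) :
    ‖(orthogonalProjection K v : E)‖ ≤ ‖v‖ := by
  nlinarith [aux_pythag K v, norm_nonneg (v - (orthogonalProjection K v : E)),
    norm_nonneg v, norm_nonneg ((orthogonalProjection K v : E))]

lemma aux_mem_of_norm_eq {E : Type*} [NormedAddCommGroup E] [InnerProductSpace ℝ E]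
    (K : Submodule ℝ E) [HasOrthogonalProjection K] (v : E)
    (h : ‖v‖ ≤ ‖(orthogonalProjection K v : E)‖) : v ∈ K := by
  have h2 := aux_pythag K v
  have h3 : ‖v - (orthogonalProjection K v : E)‖ = 0 := by
    nlinarith [norm_nonneg (v - (orthogonalProjection K v : E)), norm_nonneg v,
      aux_norm_le K v]
  have : v = (orthogonalProjection K v : E) := by
    have := norm_eq_zero.mp h3; linear_combination (norm := abel) this
  rw [this]; exact (orthogonalProjection K v).2

/-- `L₁ ∩ L₂ = {0}` iff the operator norm of the composition of the orthogonal
projections `P_{L₂} P_{L₁}` is strictly less than 1. -/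
theorem stmt1 (n : ℕ) (L₁ L₂ : Submodule ℝ (EuclideanSpace ℝ (Fin n))) :
    L₁ ⊓ L₂ = ⊥ ↔
      ‖(L₂.subtypeL ∘L L₂.orthogonalProjectionOnto) ∘L
        (L₁.subtypeL ∘L L₁.orthogonalProjectionOnto)‖ < 1 := by
  set E := EuclideanSpace ℝ (Fin n)
  set T := (L₂.subtypeL ∘L orthogonalProjection L₂) ∘L
      (L₁.subtypeL ∘L orthogonalProjection L₁) with hT
  have hTapp : ∀ v : E, T v = (orthogonalProjection L₂ (orthogonalProjection L₁ v : E) : E) := by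
    intro v; rfl
  constructor
  · intro hbot
    by_contra hge
    push_neg at hge
    -- T ≠ 0
    obtain ⟨v, hv⟩ : ∃ v : E, T v ≠ 0 := by
      by_contra h; push_neg at h
      have : ‖T‖ ≤ 0 := ContinuousLinearMap.opNorm_le_bound T le_rfl fun y => by simp [h y]
      linarith
    have hvne : v ≠ 0 := fun h => hv (by simp [h])
    have hsphere : (Metric.sphere (0 : E) 1).Nonempty :=
      ⟨‖v‖⁻¹ • v, by simp [norm_smul, abs_of_nonneg, inv_mul_cancel₀ (norm_ne_zero_iff.mpr hvne)]⟩
    obtain ⟨x, hx, hmax⟩ := (isCompact_sphere (0 : E) 1).exists_isMaxOn hsphere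
      ((continuous_norm.comp T.continuous).continuousOn)
    have hxnorm : ‖x‖ = 1 := by simpa using hx
    -- ‖T‖ ≤ ‖T x‖
    have hbound : ‖T‖ ≤ ‖T x‖ := by
      apply ContinuousLinearMap.opNorm_le_bound _ (norm_nonneg _)
      intro y
      rcases eq_or_ne y 0 with rfl | hy
      · simp
      · have hyy : (‖y‖⁻¹ • y) ∈ Metric.sphere (0 : E) 1 := by
          simp [norm_smul, abs_of_nonneg, inv_mul_cancel₀ (norm_ne_zero_iff.mpr hy)]
        have hny : (0:ℝ) < ‖y‖ := norm_pos_iff.mpr hy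
        have this : ‖y‖⁻¹ * ‖T y‖ ≤ ‖T x‖ := by
          simpa [norm_smul, abs_of_nonneg hny.le] using hmax hyy
        calc ‖T y‖ = ‖y‖ * (‖y‖⁻¹ * ‖T y‖) := by field_simp
          _ ≤ ‖y‖ * ‖T x‖ := by
              apply mul_le_mul_of_nonneg_left _ (le_of_lt hny)
              simpa using this
          _ = ‖T x‖ * ‖y‖ := mul_comm _ _
    have h1 : (1:ℝ) ≤ ‖T x‖ := le_trans hge hbound
    -- chain of inequalities
    have hle2 : ‖T x‖ ≤ ‖(orthogonalProjection L₁ x : E)‖ := by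
      rw [hTapp]; exact aux_norm_le L₂ _
    have hle1 : ‖(orthogonalProjection L₁ x : E)‖ ≤ ‖x‖ := aux_norm_le L₁ x
    have hxL1 : x ∈ L₁ := by
      apply aux_mem_of_norm_eq L₁ x
      rw [hxnorm]; linarith
    have hP1x : (orthogonalProjection L₁ x : E) = x := starProjection_eq_self_iff.mpr hxL1
    have hxL2 : x ∈ L₂ := by
      apply aux_mem_of_norm_eq L₂ x
      have : ‖(orthogonalProjection L₂ x : E)‖ = ‖T x‖ := by rw [hTapp, hP1x]
      rw [this, hxnorm]; exact h1
    have : x ∈ L₁ ⊓ L₂ := ⟨hxL1, hxL2⟩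
    rw [hbot] at this
    simp only [Submodule.mem_bot] at this
    rw [this] at hxnorm; simp at hxnorm
  · intro hlt
    rw [eq_bot_iff]
    rintro x ⟨hx1, hx2⟩
    rw [Submodule.mem_bot]
    by_contra hx0
    have hTx : T x = x := by
      rw [hTapp, show (orthogonalProjection L₁ x : E) = x from starProjection_eq_self_iff.mpr hx1,
        show (orthogonalProjection L₂ x : E) = x from starProjection_eq_self_iff.mpr hx2]
    have := T.le_opNorm x
    rw [hTx] at this
    have hnx : (0:ℝ) < ‖x‖ := norm_pos_iff.mpr hx0
    nlinarith
end

section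
/- Let X = UΣVᵀ with U, V orthogonal, Σ = diag(σ₁,…,σ_n), and let Y = UΣ̃Vᵀ where Σ̃ = diag(σ₁,…,σ_r,0,…,0). Then for all A, B ∈ ℝ^{n×n}, the Frobenius inner product ⟨AY + YB, X − Y⟩ = Trace((X−Y)ᵀ(AY + YB)) = 0. -/
open Matrix

/-- Let `X = UΣVᵀ` with `U, V` orthogonal, `Σ = diag(σ₁,…,σ_n)` decreasing nonnegative,
and `Y = UΣ̃Vᵀ` its rank-`r` truncation. Then for all `A, B`,
`⟨AY + YB, X − Y⟩ = Trace((X−Y)ᵀ(AY + YB)) = 0`. -/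
theorem stmt9 (n r : ℕ) (U V : Matrix (Fin n) (Fin n) ℝ)
    (hU : Uᵀ * U = 1) (hV : Vᵀ * V = 1)
    (σ : Fin n → ℝ) (hmono : Antitone σ) (hnn : ∀ i, 0 ≤ σ i)
    (A B : Matrix (Fin n) (Fin n) ℝ) :
    Matrix.trace
      ((U * Matrix.diagonal σ * Vᵀ -
          U * Matrix.diagonal (fun i : Fin n => if (i : ℕ) < r then σ i else 0) * Vᵀ)ᵀ *
        (A * (U * Matrix.diagonal (fun i : Fin n => if (i : ℕ) < r then σ i else 0) * Vᵀ) +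
         (U * Matrix.diagonal (fun i : Fin n => if (i : ℕ) < r then σ i else 0) * Vᵀ) * B)) =
      0 := by
  set D := Matrix.diagonal σ with hD
  set T := Matrix.diagonal (fun i : Fin n => if (i : ℕ) < r then σ i else 0) with hT
  have hdiff : U * D * Vᵀ - U * T * Vᵀ = U * (D - T) * Vᵀ := by noncomm_ring
  have hsub : D - T = Matrix.diagonal (fun i : Fin n => σ i - if (i : ℕ) < r then σ i else 0) := by
    rw [hD, hT, Matrix.diagonal_sub]
  have hET : (D - T) * T = 0 := by
    rw [hsub, hT, Matrix.diagonal_mul_diagonal]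
    ext i j
    simp only [Matrix.diagonal_apply, Matrix.zero_apply]
    split_ifs with h1 h2 <;> simp_all <;> ring
  have hTE : T * (D - T) = 0 := by
    rw [hsub, hT, Matrix.diagonal_mul_diagonal]
    ext i j
    simp only [Matrix.diagonal_apply, Matrix.zero_apply]
    split_ifs with h1 h2 <;> simp_all <;> ring
  have hEt : (D - T)ᵀ = D - T := by
    rw [hD, hT, Matrix.transpose_sub, Matrix.diagonal_transpose, Matrix.diagonal_transpose]
  rw [hdiff, Matrix.transpose_mul, Matrix.transpose_mul, Matrix.transpose_transpose, hEt,
    Matrix.mul_add, Matrix.trace_add]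
  have h1 : Matrix.trace (V * ((D - T) * Uᵀ) * (A * (U * T * Vᵀ))) = 0 := by
    have : V * ((D - T) * Uᵀ) * (A * (U * T * Vᵀ)) =
        V * ((D - T) * (Uᵀ * A * U) * T) * Vᵀ := by noncomm_ring
    rw [this, Matrix.trace_mul_cycle, ← Matrix.mul_assoc, hV, Matrix.one_mul]
    have : (D - T) * (Uᵀ * A * U) * T = (D - T) * ((Uᵀ * A * U) * T) := by
      rw [Matrix.mul_assoc]
    rw [this, Matrix.trace_mul_comm, Matrix.mul_assoc, Matrix.mul_assoc,
      hTE, Matrix.mul_zero, Matrix.mul_zero, Matrix.trace_zero]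
  have h2 : Matrix.trace (V * ((D - T) * Uᵀ) * (U * T * Vᵀ * B)) = 0 := by
    have : V * ((D - T) * Uᵀ) * (U * T * Vᵀ * B) =
        V * ((D - T) * (Uᵀ * U) * T) * (Vᵀ * B) := by noncomm_ring
    rw [this, hU, Matrix.mul_one, hET, Matrix.mul_zero, Matrix.zero_mul, Matrix.trace_zero]
  rw [h1, h2, add_zero]
end

section
/- (Von Neumann) If L₁ and L₂ are closed subspaces of a Hilbert space X with orthogonal projections P_{L₁}, P_{L₂}, then for every x ∈ X, (P_{L₂}P_{L₁})^k(x) converges to P_{L₁∩L₂}(x) as k → ∞. -/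
open Filter
open scoped Topology RealInnerProductSpace

section aux
variable {X : Type*} [NormedAddCommGroup X] [InnerProductSpace ℝ X]

lemma vn_norm_le (L : Submodule ℝ X) [CompleteSpace L] (v : X) :
    ‖(Submodule.orthogonalProjectionOnto L v : X)‖ ≤ ‖v‖ := by
  have h := Submodule.orthogonalProjectionFn_norm_sq L v
  simp only [Submodule.orthogonalProjectionFn_eq] at h
  nlinarith [norm_nonneg (v - (Submodule.orthogonalProjectionOnto L v : X)), norm_nonneg v,
    norm_nonneg (Submodule.orthogonalProjectionOnto L v : X)]

lemma vn_fix_of_norm (L : Submodule ℝ X) [CompleteSpace L] (v : X)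
    (h : ‖v‖ ≤ ‖(Submodule.orthogonalProjectionOnto L v : X)‖) :
    (Submodule.orthogonalProjectionOnto L v : X) = v := by
  have h2 := Submodule.orthogonalProjectionFn_norm_sq L v
  simp only [Submodule.orthogonalProjectionFn_eq] at h2
  have h3 : ‖v - (Submodule.orthogonalProjectionOnto L v : X)‖ = 0 := by
    nlinarith [norm_nonneg (v - (Submodule.orthogonalProjectionOnto L v : X)),
      norm_nonneg (Submodule.orthogonalProjectionOnto L v : X), norm_nonneg v]
  exact (sub_eq_zero.mp (norm_eq_zero.mp h3)).symm

lemma vn_inner_self (L : Submodule ℝ X) [CompleteSpace L] (v : X) :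
    ⟪(Submodule.orthogonalProjectionOnto L v : X), v⟫ = ‖(Submodule.orthogonalProjectionOnto L v : X)‖ ^ 2 := by
  have h0 : ⟪v - (Submodule.orthogonalProjectionOnto L v : X), (Submodule.orthogonalProjectionOnto L v : X)⟫ = 0 :=
    Submodule.starProjection_inner_eq_zero v _ (Submodule.orthogonalProjectionOnto L v).2
  have h1 : ⟪(Submodule.orthogonalProjectionOnto L v : X), v - (Submodule.orthogonalProjectionOnto L v : X)⟫ = 0 := by
    rwa [real_inner_comm] at h0
  rw [inner_sub_right] at h1
  rw [← real_inner_self_eq_norm_sq]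
  linarith

end aux

/-- Von Neumann's alternating projection theorem: for closed subspaces `L₁, L₂`
of a Hilbert space, `(P_{L₂} P_{L₁})^k x → P_{L₁ ∩ L₂} x` for every `x`. -/
theorem stmt17 {X : Type*} [NormedAddCommGroup X] [InnerProductSpace ℝ X]
    [CompleteSpace X] (L₁ L₂ : Submodule ℝ X)
    [CompleteSpace L₁] [CompleteSpace L₂]
    [CompleteSpace (L₁ ⊓ L₂ : Submodule ℝ X)] (x : X) :
    Filter.Tendsto
      (fun k : ℕ =>
        (((L₂.subtypeL ∘L Submodule.orthogonalProjectionOnto L₂) ∘L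
            (L₁.subtypeL ∘L Submodule.orthogonalProjectionOnto L₁)) ^ k) x)
      Filter.atTop
      (nhds ((Submodule.orthogonalProjectionOnto (L₁ ⊓ L₂) x : X))) := by
  set Q₁ : X →L[ℝ] X := L₁.subtypeL ∘L Submodule.orthogonalProjectionOnto L₁ with hQ₁def
  set Q₂ : X →L[ℝ] X := L₂.subtypeL ∘L Submodule.orthogonalProjectionOnto L₂ with hQ₂def
  have hQ₁app : ∀ v, Q₁ v = (Submodule.orthogonalProjectionOnto L₁ v : X) := fun v => rfl
  have hQ₂app : ∀ v, Q₂ v = (Submodule.orthogonalProjectionOnto L₂ v : X) := fun v => rfl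
  have hQ₁mem : ∀ v, Q₁ v ∈ L₁ := fun v => (Submodule.orthogonalProjectionOnto L₁ v).2
  have hQ₂mem : ∀ v, Q₂ v ∈ L₂ := fun v => (Submodule.orthogonalProjectionOnto L₂ v).2
  have hQ₁fix : ∀ v, v ∈ L₁ → Q₁ v = v := fun v hv =>
    (hQ₁app v).trans (Submodule.starProjection_eq_self_iff.mpr hv)
  have hQ₂fix : ∀ v, v ∈ L₂ → Q₂ v = v := fun v hv =>
    (hQ₂app v).trans (Submodule.starProjection_eq_self_iff.mpr hv)
  have hQ₁le : ∀ v, ‖Q₁ v‖ ≤ ‖v‖ := fun v => vn_norm_le L₁ v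
  have hQ₂le : ∀ v, ‖Q₂ v‖ ≤ ‖v‖ := fun v => vn_norm_le L₂ v
  have hQ₁sa : ∀ u v, ⟪Q₁ u, v⟫ = ⟪u, Q₁ v⟫ := fun u v =>
    Submodule.inner_starProjection_left_eq_right L₁ u v
  have hQ₂sa : ∀ u v, ⟪Q₂ u, v⟫ = ⟪u, Q₂ v⟫ := fun u v =>
    Submodule.inner_starProjection_left_eq_right L₂ u v
  set A : X →L[ℝ] X := Q₁ ∘L (Q₂ ∘L Q₁) with hAdef
  have hAapp : ∀ v, A v = Q₁ (Q₂ (Q₁ v)) := fun v => rfl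
  have hAsa : ∀ u v, ⟪A u, v⟫ = ⟪u, A v⟫ := by
    intro u v
    rw [hAapp, hAapp, hQ₁sa, hQ₂sa, hQ₁sa]
  set y : X := Q₁ x with hydef
  set f : ℕ → X := fun n => (A ^ n) y with hfdef
  have hfsucc : ∀ n, f (n + 1) = A (f n) := by
    intro n
    simp only [hfdef, pow_succ', ContinuousLinearMap.mul_apply]
  have hfL₁ : ∀ n, Q₁ (f n) = f n := by
    intro n
    induction n with
    | zero =>
      simp only [hfdef, pow_zero, ContinuousLinearMap.one_apply, hydef]
      exact hQ₁fix _ (hQ₁mem x)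
    | succ n _ =>
      rw [hfsucc, hAapp]
      exact hQ₁fix _ (hQ₁mem _)
  set c : ℕ → ℝ := fun k => ⟪(A ^ k) y, y⟫ with hcdef
  have hAn_sa : ∀ n u v, ⟪(A ^ n) u, v⟫ = ⟪u, (A ^ n) v⟫ := by
    intro n
    induction n with
    | zero => simp
    | succ n ih =>
      intro u v
      rw [pow_succ', ContinuousLinearMap.mul_apply, hAsa, ih, ← ContinuousLinearMap.mul_apply,
        pow_mul_comm']
  have hc_inner : ∀ n m, ⟪f n, f m⟫ = c (n + m) := by
    intro n m
    have h : c (n + m) = ⟪(A ^ n) ((A ^ m) y), y⟫ := by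
      simp only [hcdef, pow_add, ContinuousLinearMap.mul_apply]
    rw [h, hAn_sa, real_inner_comm]
  have hnormsq : ∀ n, ‖f n‖ ^ 2 = c (2 * n) := by
    intro n
    rw [← real_inner_self_eq_norm_sq, hc_inner]
    congr 1
    ring
  have hcodd : ∀ j, c (2 * j + 1) = ‖Q₂ (f j)‖ ^ 2 := by
    intro j
    have h1 : c (2 * j + 1) = ⟪f (j + 1), f j⟫ := by
      rw [hc_inner]; congr 1; ring
    rw [h1, hfsucc, hAapp, hfL₁, hQ₁sa, hfL₁]
    rw [hQ₂app, vn_inner_self]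
  have hcanti : ∀ k, c (k + 1) ≤ c k := by
    intro k
    rcases Nat.even_or_odd k with ⟨j, hj⟩ | ⟨j, hj⟩
    · have hk : k = 2 * j := by omega
      subst hk
      rw [hcodd, ← hnormsq]
      exact pow_le_pow_left₀ (norm_nonneg _) (hQ₂le _) 2
    · subst hj
      have h2 : 2 * j + 1 + 1 = 2 * (j + 1) := by ring
      rw [h2, ← hnormsq, hcodd, hfsucc, hAapp, hfL₁]
      exact pow_le_pow_left₀ (norm_nonneg _) (hQ₁le _) 2
  have hcnonneg : ∀ k, 0 ≤ c k := by
    intro k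
    rcases Nat.even_or_odd k with ⟨j, hj⟩ | ⟨j, hj⟩
    · have hk : k = 2 * j := by omega
      subst hk
      rw [← hnormsq]
      positivity
    · subst hj
      rw [hcodd]
      positivity
  have hanti : Antitone c := antitone_nat_of_succ_le hcanti
  have hbdd : BddBelow (Set.range c) := ⟨0, fun r ⟨k, hk⟩ => hk ▸ hcnonneg k⟩
  have hclim : Tendsto c atTop (𝓝 (⨅ k, c k)) := tendsto_atTop_ciInf hanti hbdd
  set l : ℝ := ⨅ k, c k with hldef
  have hcauchy : CauchySeq f := by
    rw [Metric.cauchySeq_iff]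
    intro ε hε
    obtain ⟨N, hN⟩ := (Metric.tendsto_atTop.mp hclim) (ε ^ 2 / 5) (by positivity)
    refine ⟨N, fun m hm n hn => ?_⟩
    have key : ‖f m - f n‖ ^ 2 = c (2 * m) - 2 * c (m + n) + c (2 * n) := by
      rw [norm_sub_sq_real, hnormsq, hnormsq, hc_inner]
    have h1 := abs_lt.mp (by simpa [Real.dist_eq] using hN (2 * m) (by omega))
    have h2 := abs_lt.mp (by simpa [Real.dist_eq] using hN (2 * n) (by omega))
    have h3 := abs_lt.mp (by simpa [Real.dist_eq] using hN (m + n) (by omega))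
    rw [dist_eq_norm]
    nlinarith [norm_nonneg (f m - f n), h1.1, h1.2, h2.1, h2.2, h3.1, h3.2]
  obtain ⟨p, hp⟩ := cauchySeq_tendsto_of_complete hcauchy
  have hAp : A p = p := by
    have h1 : Tendsto (fun n => f (n + 1)) atTop (𝓝 p) := hp.comp (tendsto_add_atTop_nat 1)
    have h2 : Tendsto (fun n => A (f n)) atTop (𝓝 (A p)) := (A.continuous.tendsto p).comp hp
    simp only [hfsucc] at h1
    exact tendsto_nhds_unique h2 h1
  have hQ₁p : Q₁ p = p := by
    have hnorm : ‖p‖ ≤ ‖Q₁ p‖ :=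
      calc ‖p‖ = ‖Q₁ (Q₂ (Q₁ p))‖ := by rw [← hAapp, hAp]
        _ ≤ ‖Q₂ (Q₁ p)‖ := hQ₁le _
        _ ≤ ‖Q₁ p‖ := hQ₂le _
    rw [hQ₁app]
    exact vn_fix_of_norm L₁ p (by rwa [hQ₁app] at hnorm)
  have hp1 : p ∈ L₁ := hQ₁p ▸ hQ₁mem p
  have hQ₂p : Q₂ p = p := by
    have hnorm : ‖p‖ ≤ ‖Q₂ p‖ :=
      calc ‖p‖ = ‖Q₁ (Q₂ (Q₁ p))‖ := by rw [← hAapp, hAp]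
        _ ≤ ‖Q₂ (Q₁ p)‖ := hQ₁le _
        _ = ‖Q₂ p‖ := by rw [hQ₁p]
    rw [hQ₂app]
    exact vn_fix_of_norm L₂ p (by rwa [hQ₂app] at hnorm)
  have hp2 : p ∈ L₂ := hQ₂p ▸ hQ₂mem p
  have hApow : ∀ n z, z ∈ L₁ → z ∈ L₂ → (A ^ n) z = z := by
    intro n z hz1 hz2
    have hAz : A z = z := by rw [hAapp, hQ₁fix z hz1, hQ₂fix z hz2, hQ₁fix z hz1]
    induction n with
    | zero => simp
    | succ n ih => rw [pow_succ, ContinuousLinearMap.mul_apply, hAz, ih]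
  have hinner : ∀ w ∈ (L₁ ⊓ L₂ : Submodule ℝ X), ⟪x - p, w⟫ = 0 := by
    intro w hw
    obtain ⟨hw1, hw2⟩ := hw
    have hfw : ∀ n, ⟪f n, w⟫ = ⟪x, w⟫ := by
      intro n
      rw [hfdef]
      simp only
      rw [hAn_sa, hApow n w hw1 hw2, hydef, hQ₁sa, hQ₁fix w hw1]
    have ht : Tendsto (fun n => ⟪f n, w⟫) atTop (𝓝 ⟪p, w⟫) :=
      hp.inner tendsto_const_nhds
    simp only [hfw] at ht
    have heq : ⟪x, w⟫ = ⟪p, w⟫ := tendsto_nhds_unique tendsto_const_nhds ht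
    rw [inner_sub_left]
    rw [heq]
    ring
  have hproj : (Submodule.orthogonalProjectionOnto (L₁ ⊓ L₂) x : X) = p :=
    Submodule.eq_starProjection_of_mem_of_inner_eq_zero ⟨hp1, hp2⟩ hinner
  have hT : ∀ k, ((Q₂ ∘L Q₁) ^ (k + 1)) x = Q₂ (f k) := by
    intro k
    induction k with
    | zero =>
      simp only [hfdef, pow_zero, pow_one, ContinuousLinearMap.one_apply, hydef]
      rfl
    | succ k ih =>
      rw [pow_succ', ContinuousLinearMap.mul_apply, ih, hfsucc, hAapp, hfL₁]
      rfl
  rw [hproj]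
  have hconv : Tendsto (fun k => ((Q₂ ∘L Q₁) ^ (k + 1)) x) atTop (𝓝 p) := by
    simp only [hT]
    have h2 : Tendsto (fun n => Q₂ (f n)) atTop (𝓝 (Q₂ p)) := (Q₂.continuous.tendsto p).comp hp
    rwa [hQ₂p] at h2
  exact (tendsto_add_atTop_iff_nat 1).mp hconv
end
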